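/- In S = (IO∞(ℤ))ⁿ, for distinct indices i₁,…,i_m, i_{m+1}, any congruence 𝔠 with σ_[i₁,…,i_m] ⊆ 𝔠 ⊆ σ_[i₁,…,i_m,i_{m+1}] equals σ_[i₁,…,i_m] or σ_[i₁,…,i_m,i_{m+1}]. -/

import Mathlib

/-- A partial injective self-map of ℤ (encoded as a `PEquiv`) is monotone. -/
def PMono (f : ℤ ≃. ℤ) : Prop :=
  ∀ x y a b : ℤ, a ∈ f x → b ∈ f y → x ≤ y → a ≤ b

/-- Domain of a partial injective self-map of ℤ. -/
def PDom (f : ℤ ≃. ℤ) : Set ℤ := {x | (f x).isSome}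

/-- Range of a partial injective self-map of ℤ. -/
def PRan (f : ℤ ≃. ℤ) : Set ℤ := {y | (f.symm y).isSome}

/-- Membership in IO∞(ℤ): injective (built into `PEquiv`), monotone,
with cofinite domain and cofinite range. -/
def IOZ (f : ℤ ≃. ℤ) : Prop :=
  PMono f ∧ (PDom f)ᶜ.Finite ∧ (PRan f)ᶜ.Finite

/-- Idempotent element of IO∞(ℤ). -/
def IsIdem (ε : ℤ ≃. ℤ) : Prop := ε.trans ε = ε

/-- Membership in the direct power (IO∞(ℤ))ⁿ. -/
def IOZn (n : ℕ) (α : Fin n → ℤ ≃. ℤ) : Prop := ∀ i, IOZ (α i)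

/-- Coordinatewise composition on the direct power (α then β, as in the paper). -/
def mulN {n : ℕ} (α β : Fin n → ℤ ≃. ℤ) : Fin n → ℤ ≃. ℤ := fun i => (α i).trans (β i)

/-- The identity 𝕀 of (IO∞(ℤ))ⁿ. -/
def oneN (n : ℕ) : Fin n → ℤ ≃. ℤ := fun _ => PEquiv.refl ℤ

/-- εᵢ°: the tuple with ε in coordinate i and identities elsewhere. -/
def epsT {n : ℕ} (i : Fin n) (ε : ℤ ≃. ℤ) : Fin n → ℤ ≃. ℤ :=
  fun j => if j = i then ε else PEquiv.refl ℤ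

/-- A congruence on the semigroup (IO∞(ℤ))ⁿ (relative to the carrier `IOZn n`). -/
def IsCongOn (n : ℕ) (ρ : (Fin n → ℤ ≃. ℤ) → (Fin n → ℤ ≃. ℤ) → Prop) : Prop :=
  (∀ α, IOZn n α → ρ α α) ∧
  (∀ α β, IOZn n α → IOZn n β → ρ α β → ρ β α) ∧
  (∀ α β γ, IOZn n α → IOZn n β → IOZn n γ → ρ α β → ρ β γ → ρ α γ) ∧
  (∀ α β γ, IOZn n α → IOZn n β → IOZn n γ → ρ α β →
    ρ (mulN α γ) (mulN β γ) ∧ ρ (mulN γ α) (mulN γ β))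

/-- The congruence σ_[i]. -/
def sigmaI (n : ℕ) (i : Fin n) (α β : Fin n → ℤ ≃. ℤ) : Prop :=
  ∃ ε : ℤ ≃. ℤ, IOZ ε ∧ IsIdem ε ∧ mulN α (epsT i ε) = mulN β (epsT i ε)

/-- D(α,β): the set of coordinates where α and β differ. -/
def Dset {n : ℕ} (α β : Fin n → ℤ ≃. ℤ) : Set (Fin n) := {i | α i ≠ β i}

/-- Idempotent tuple. -/
def IsIdemN {n : ℕ} (ε : Fin n → ℤ ≃. ℤ) : Prop := ∀ i, (ε i).trans (ε i) = ε i

/-- σ_[i₁,…,i_k] for the set of indices t: α and β agree after right multiplication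
by a product ε°_{i₁}⋯ε°_{i_k} of idempotents supported on t. -/
def sigmaSet (n : ℕ) (t : Finset (Fin n)) (α β : Fin n → ℤ ≃. ℤ) : Prop :=
  ∃ ε : Fin n → ℤ ≃. ℤ, IOZn n ε ∧ IsIdemN ε ∧ (∀ i ∉ t, ε i = PEquiv.refl ℤ) ∧
    mulN α ε = mulN β ε

/-!
If `ρ` is strictly above `σ_t`, pick `α ρ β` that are not `σ_t`-related. Right-multiplying by the
`t`-part of a `σ_{t ∪ {j}}`-witness makes them agree off `j`, and normalising the other coordinates
to the identity leaves `a°ⱼ ρ b°ⱼ` with `a ≠ b` differing at finitely many points. Conjugating by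
total maps of `IO∞(ℤ)` that send a point of disagreement to `z` turns this into
`𝕀 ρ (1_{ℤ ∖ {z}})°ⱼ` for every `z`; multiplying these gives `𝕀 ρ ε°ⱼ` for every idempotent `ε`.
Finally, if `γ σ_{t ∪ {j}} δ` via `ζ`, then `γ ρ γ·(ζⱼ)°ⱼ σ_t δ·(ζⱼ)°ⱼ ρ δ`.
-/

open Function

namespace PEquiv

variable {α β : Type*}

noncomputable def ofInjective (f : α → β) (hf : Injective f) : α ≃. β where
  toFun a := some (f a)
  invFun := partialInv f
  inv a b := (hf.isPartialInv a b).trans (by simp)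

@[simp]
theorem ofInjective_apply {f : α → β} (hf : Injective f) (a : α) :
    ofInjective f hf a = some (f a) := rfl

theorem isSome_ofInjective_symm_iff {f : α → β} (hf : Injective f) {b : β} :
    ((ofInjective f hf).symm b).isSome ↔ b ∈ Set.range f := by
  simp only [Option.isSome_iff_exists, eq_some_iff, ofInjective_apply, Option.some_inj,
    Set.mem_range]

theorem trans_apply {γ : Type*} (f : α ≃. β) (g : β ≃. γ) (a : α) :
    f.trans g a = (f a).bind g := rfl

theorem ofSet_trans_ofSet (s u : Set α) [DecidablePred (· ∈ s)] [DecidablePred (· ∈ u)] :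
    (ofSet s).trans (ofSet u) = ofSet (s ∩ u) := by
  ext a : 1
  by_cases hs : a ∈ s <;> by_cases hu : a ∈ u <;> simp [trans_apply, ofSet, hs, hu]

theorem eq_ofSet_of_trans_self {e : α ≃. α} (he : e.trans e = e) :
    e = ofSet {a | (e a).isSome} := by
  ext a : 1
  rcases ha : e a with _ | b
  · simp [ofSet, ha]
  · have hb : e b = some b := by simpa [trans_apply, ha] using congrArg (· a) he
    obtain rfl := e.inj hb ha
    simp [ofSet, ha]

theorem finite_setOf_apply_mem (f : α ≃. β) {G : Set β} (hG : G.Finite) :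
    {a | ∃ b ∈ G, f a = some b}.Finite := by
  have : {a | ∃ b ∈ G, f a = some b} = ⋃ b ∈ G, {a | f a = some b} := by ext; simp
  rw [this]
  exact hG.biUnion fun b _ => Set.Subsingleton.finite fun a₁ h₁ a₂ h₂ => f.inj h₁ h₂

theorem finite_ne_of_trans_ofSet_eq {a b : α ≃. β} {D : Set β} {_ : DecidablePred (· ∈ D)}
    (hD : Dᶜ.Finite) (h : a.trans (ofSet D) = b.trans (ofSet D)) : {x | a x ≠ b x}.Finite := by
  refine ((a.finite_setOf_apply_mem hD).union (b.finite_setOf_apply_mem hD)).subset ?_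
  intro x hx
  have hx' := congrArg (· x) h
  simp only [trans_apply] at hx'
  rcases ha : a x with _ | p <;> rcases hb : b x with _ | q <;> simp_all [ofSet]
  by_contra! hpq
  simp_all

end PEquiv

theorem finite_compl_PDom_trans {f g : ℤ ≃. ℤ} (hf : (PDom f)ᶜ.Finite) (hg : (PDom g)ᶜ.Finite) :
    (PDom (f.trans g))ᶜ.Finite := by
  refine (hf.union (f.finite_setOf_apply_mem hg)).subset fun x hx => ?_
  rcases hfx : f x with _ | y
  · left; simp [PDom, hfx]
  · right; refine ⟨y, ?_, hfx⟩
    simpa [PDom, PEquiv.trans_apply, hfx] using hx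

namespace IOZ

theorem symm {f : ℤ ≃. ℤ} (hf : IOZ f) : IOZ f.symm := by
  obtain ⟨hmono, hdom, hran⟩ := hf
  refine ⟨fun x y a b ha hb hxy => ?_, hran, hdom⟩
  rw [PEquiv.mem_iff_mem] at ha hb
  by_contra! hba
  obtain rfl : x = y := le_antisymm hxy (hmono b a y x hb ha hba.le)
  exact hba.ne (f.inj hb ha)

theorem trans {f g : ℤ ≃. ℤ} (hf : IOZ f) (hg : IOZ g) : IOZ (f.trans g) := by
  refine ⟨fun x y a b ha hb hxy => ?_, finite_compl_PDom_trans hf.2.1 hg.2.1, ?_⟩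
  · obtain ⟨u, hu, ha⟩ := (PEquiv.mem_trans _ _ _ _).1 ha
    obtain ⟨v, hv, hb⟩ := (PEquiv.mem_trans _ _ _ _).1 hb
    exact hg.1 u v a b ha hb (hf.1 x y u v hu hv hxy)
  · rw [PRan, ← PDom, PEquiv.symm_trans_rev]
    exact finite_compl_PDom_trans hg.2.2 hf.2.2

theorem ofSet {s : Set ℤ} {_ : DecidablePred (· ∈ s)} (hs : sᶜ.Finite) : IOZ (PEquiv.ofSet s) := by
  have hdom : PDom (PEquiv.ofSet s) = s := by
    ext x
    by_cases hx : x ∈ s <;> simp [PDom, PEquiv.ofSet, hx]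
  refine ⟨fun x y a b ha hb hxy => ?_, by rwa [hdom], ?_⟩
  · rw [PEquiv.mem_ofSet_iff] at ha hb
    rwa [ha.1, hb.1]
  · rwa [PRan, PEquiv.ofSet_symm, ← PDom, hdom]

theorem refl : IOZ (PEquiv.refl ℤ) := by
  rw [← PEquiv.ofSet_univ]
  exact ofSet (by simp)

theorem ofInjective {f : ℤ → ℤ} (hf : StrictMono f) (hran : (Set.range f)ᶜ.Finite) :
    IOZ (PEquiv.ofInjective f hf.injective) := by
  refine ⟨fun x y a b ha hb hxy => ?_, by simp [PDom], ?_⟩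
  · simp only [PEquiv.ofInjective_apply, Option.mem_def, Option.some_inj] at ha hb
    exact ha ▸ hb ▸ hf.monotone hxy
  · simpa only [PRan, PEquiv.isSome_ofInjective_symm_iff, Set.ofPred_mem_eq] using hran

end IOZ

theorem exists_IOZ_apply_eq_avoiding {F : Set ℤ} (hF : F.Finite) (z x₀ : ℤ) :
    ∃ f : ℤ ≃. ℤ, IOZ f ∧ f z = some x₀ ∧ ∀ k ≠ z, ∃ y ∉ F, f k = some y := by
  obtain ⟨B, hB⟩ := ((hF.insert x₀).image abs).bddAbove
  have hbound : ∀ y ∈ insert x₀ F, -B ≤ y ∧ y ≤ B := fun y hy => abs_le.1 (hB ⟨y, hy, rfl⟩)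
  obtain ⟨hx₀l, hx₀r⟩ := hbound x₀ (Set.mem_insert _ _)
  -- jump over `[-B, B]` everywhere except at `z`, which lands on `x₀`
  let g (k : ℤ) : ℤ := if k < z then k - z - B else if k = z then x₀ else k - z + B
  have hg : StrictMono g := by
    intro k l hkl
    simp only [g]
    split_ifs <;> omega
  have hran : (Set.range g)ᶜ ⊆ Set.Icc (-B) B := by
    intro y hy
    by_contra hyB
    rw [Set.mem_Icc, not_and_or, not_le, not_le] at hyB
    rcases hyB with hyB | hyB
    · exact hy ⟨y + z + B, by simp only [g]; split_ifs <;> omega⟩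
    · exact hy ⟨y + z - B, by simp only [g]; split_ifs <;> omega⟩
  refine ⟨PEquiv.ofInjective g hg.injective, IOZ.ofInjective hg ((Set.finite_Icc _ _).subset hran),
    by simp [g], fun k hk => ⟨g k, fun hF => ?_, rfl⟩⟩
  have := hbound (g k) (Set.mem_insert_of_mem _ hF)
  simp only [g] at this
  split_ifs at this <;> omega

theorem exists_trans_trans_eq_refl {a : ℤ ≃. ℤ} (ha : IOZ a) :
    ∃ l r : ℤ ≃. ℤ, IOZ l ∧ IOZ r ∧ (l.trans a).trans r = PEquiv.refl ℤ := by
  obtain ⟨x₀, hx₀⟩ := ha.2.1.infinite_compl.nonempty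
  obtain ⟨l, hl, hlz, hlk⟩ := exists_IOZ_apply_eq_avoiding ha.2.1 0 x₀
  refine ⟨l, (l.trans a).symm, hl, (hl.trans ha).symm, PEquiv.trans_symm_eq_iff_forall_isSome.2 ?_⟩
  intro k
  obtain ⟨y, hy, hly⟩ : ∃ y ∈ PDom a, l k = some y := by
    by_cases hk : k = 0
    · exact ⟨x₀, not_not.1 hx₀, hk ▸ hlz⟩
    · obtain ⟨y, hy, hly⟩ := hlk k hk
      exact ⟨y, not_not.1 hy, hly⟩
  simpa [PEquiv.trans_apply, hly, PDom] using hy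

structure IsCongruence {M : Type*} (P : M → Prop) (mul : M → M → M) (r : M → M → Prop) :
    Prop where
  refl : ∀ a, P a → r a a
  symm : ∀ {a b}, P a → P b → r a b → r b a
  trans : ∀ {a b c}, P a → P b → P c → r a b → r b c → r a c
  mul_right : ∀ {a b} c, P a → P b → P c → r a b → r (mul a c) (mul b c)
  mul_left : ∀ {a b} c, P a → P b → P c → r a b → r (mul c a) (mul c b)

namespace IsCongruence

theorem comap {M N : Type*} {P : M → Prop} {mul : M → M → M} {r : M → M → Prop}
    (hr : IsCongruence P mul r) {Q : N → Prop} {mul' : N → N → N} (f : N → M)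
    (hf : ∀ x, Q x → P (f x)) (hmul : ∀ x y, f (mul' x y) = mul (f x) (f y)) :
    IsCongruence Q mul' (fun x y => r (f x) (f y)) where
  refl a ha := hr.refl _ (hf a ha)
  symm ha hb := hr.symm (hf _ ha) (hf _ hb)
  trans ha hb hc := hr.trans (hf _ ha) (hf _ hb) (hf _ hc)
  mul_right c ha hb hc h := by
    simpa only [hmul] using hr.mul_right _ (hf _ ha) (hf _ hb) (hf _ hc) h
  mul_left c ha hb hc h := by
    simpa only [hmul] using hr.mul_left _ (hf _ ha) (hf _ hb) (hf _ hc) h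

section IOZ

variable {r : (ℤ ≃. ℤ) → (ℤ ≃. ℤ) → Prop} (hr : IsCongruence IOZ PEquiv.trans r)
include hr

theorem refl_ofSet_compl_singleton_of_apply {a b : ℤ ≃. ℤ} (ha : IOZ a) (hb : IOZ b)
    (hfin : {x | a x ≠ b x}.Finite) (hab : r a b) {x₀ p : ℤ} (hxa : a x₀ = some p)
    (hxb : b x₀ = none) (z : ℤ) : r (PEquiv.refl ℤ) (PEquiv.ofSet {z}ᶜ) := by
  obtain ⟨f, hf, hfz, hfk⟩ := exists_IOZ_apply_eq_avoiding (ha.2.1.union hfin) z x₀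
  have hfk' : ∀ k ≠ z, ∃ y, f k = some y ∧ (a y).isSome ∧ a y = b y := fun k hk => by
    obtain ⟨y, hy, hfy⟩ := hfk k hk
    simp only [Set.mem_union, Set.mem_compl_iff, PDom, Set.mem_ofPred_eq, not_or, not_not] at hy
    exact ⟨y, hfy, hy⟩
  have hg : (f.trans a).trans (f.trans a).symm = PEquiv.refl ℤ := by
    refine PEquiv.trans_symm_eq_iff_forall_isSome.2 fun k => ?_
    by_cases hk : k = z
    · simp [PEquiv.trans_apply, hk, hfz, hxa]
    · obtain ⟨y, hfy, hay, -⟩ := hfk' k hk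
      simp [PEquiv.trans_apply, hfy, hay]
  have hfb : f.trans b = (PEquiv.ofSet {z}ᶜ).trans (f.trans a) := by
    ext k : 1
    by_cases hk : k = z
    · simp [PEquiv.ofSet, PEquiv.trans_apply, hk, hfz, hxb]
    · obtain ⟨y, hfy, -, hab⟩ := hfk' k hk
      simp [PEquiv.ofSet, PEquiv.trans_apply, hfy, hab, hk]
  have hrfg := hr.mul_right (f.trans a).symm (hf.trans ha) (hf.trans hb) (hf.trans ha).symm
    (hr.mul_left f ha hb hf hab)
  rwa [hg, hfb, PEquiv.trans_assoc, hg, PEquiv.trans_refl] at hrfg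

theorem refl_ofSet_compl_singleton {a b : ℤ ≃. ℤ} (ha : IOZ a) (hb : IOZ b)
    (hfin : {x | a x ≠ b x}.Finite) (hab : r a b) (hne : a ≠ b) (z : ℤ) :
    r (PEquiv.refl ℤ) (PEquiv.ofSet {z}ᶜ) := by
  obtain ⟨x₀, hx₀⟩ : ∃ x₀, a x₀ ≠ b x₀ := by
    by_contra! h
    exact hne (PEquiv.ext h)
  rcases hxa : a x₀ with _ | p <;> rcases hxb : b x₀ with _ | q
  · exact absurd (hxa.trans hxb.symm) hx₀
  · refine hr.refl_ofSet_compl_singleton_of_apply hb ha ?_ (hr.symm ha hb hab) hxb hxa z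
    simpa only [ne_comm] using hfin
  · exact hr.refl_ofSet_compl_singleton_of_apply ha hb hfin hab hxa hxb z
  · -- cutting off the value `q` turns a disagreement of values into one of definedness
    have hpq : p ≠ q := fun h => hx₀ (by rw [hxa, hxb, h])
    have hq : IOZ (PEquiv.ofSet {q}ᶜ) := IOZ.ofSet (by simp)
    refine hr.refl_ofSet_compl_singleton_of_apply (ha.trans hq) (hb.trans hq)
      (hfin.subset fun x hx h => hx (by simp [PEquiv.trans_apply, h]))
      (hr.mul_right _ ha hb hq hab) (p := p) (x₀ := x₀) ?_ ?_ z <;>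
      simp [PEquiv.trans_apply, PEquiv.ofSet, hxa, hxb, hpq]

theorem refl_ofSet_of_finite_compl (hz : ∀ z, r (PEquiv.refl ℤ) (PEquiv.ofSet {z}ᶜ))
    {s : Set ℤ} {_ : DecidablePred (· ∈ s)} (hs : sᶜ.Finite) :
    r (PEquiv.refl ℤ) (PEquiv.ofSet s) := by
  classical
  suffices key : ∀ C : Set ℤ, C.Finite → r (PEquiv.refl ℤ) (PEquiv.ofSet Cᶜ) by
    convert key sᶜ hs using 2
    simp
  intro C hC
  induction C, hC using Set.Finite.induction_on with
  | empty => simpa using hr.refl _ IOZ.refl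
  | @insert z C _ hC ih =>
    have hstep := hr.mul_right (PEquiv.ofSet {z}ᶜ) IOZ.refl (IOZ.ofSet (by simpa using hC))
      (IOZ.ofSet (by simp)) ih
    rw [PEquiv.refl_trans, PEquiv.ofSet_trans_ofSet] at hstep
    refine hr.trans IOZ.refl (IOZ.ofSet (by simp)) (IOZ.ofSet (by simpa using hC.insert z))
      (hz z) ?_
    convert hstep using 2
    ext
    simp [and_comm]

theorem refl_of_isIdem {a b e : ℤ ≃. ℤ} (ha : IOZ a) (hb : IOZ b) (he : IOZ e) (hidem : IsIdem e)
    (hab : r a b) (hne : a ≠ b) (heq : a.trans e = b.trans e) {e' : ℤ ≃. ℤ} (he' : IOZ e')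
    (hidem' : IsIdem e') : r (PEquiv.refl ℤ) e' := by
  rw [PEquiv.eq_ofSet_of_trans_self hidem] at heq
  rw [PEquiv.eq_ofSet_of_trans_self hidem']
  exact hr.refl_ofSet_of_finite_compl
    (hr.refl_ofSet_compl_singleton ha hb (PEquiv.finite_ne_of_trans_ofSet_eq he.2.1 heq) hab hne)
    he'.2.1

end IOZ

end IsCongruence

section Tuples

variable {n : ℕ}

theorem IsCongOn.isCongruence {ρ : (Fin n → ℤ ≃. ℤ) → (Fin n → ℤ ≃. ℤ) → Prop}
    (h : IsCongOn n ρ) : IsCongruence (IOZn n) mulN ρ where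
  refl := h.1
  symm ha hb := h.2.1 _ _ ha hb
  trans ha hb hc := h.2.2.1 _ _ _ ha hb hc
  mul_right c ha hb hc hab := (h.2.2.2 _ _ c ha hb hc hab).1
  mul_left c ha hb hc hab := (h.2.2.2 _ _ c ha hb hc hab).2

theorem IOZn_oneN (n : ℕ) : IOZn n (oneN n) := fun _ => IOZ.refl

theorem IOZn_mulN {α β : Fin n → ℤ ≃. ℤ} (hα : IOZn n α) (hβ : IOZn n β) :
    IOZn n (mulN α β) := fun k => (hα k).trans (hβ k)

theorem IOZn_epsT (j : Fin n) {a : ℤ ≃. ℤ} (ha : IOZ a) : IOZn n (epsT j a) := by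
  intro k
  unfold epsT
  split_ifs
  exacts [ha, IOZ.refl]

theorem IOZn_piecewise (t : Finset (Fin n)) {ε : Fin n → ℤ ≃. ℤ} (hε : IOZn n ε) :
    IOZn n (t.piecewise ε (oneN n)) := by
  intro k
  by_cases hk : k ∈ t <;> simp [hk, hε k, oneN, IOZ.refl]

theorem mulN_assoc (α β γ : Fin n → ℤ ≃. ℤ) : mulN (mulN α β) γ = mulN α (mulN β γ) :=
  funext fun _ => PEquiv.trans_assoc _ _ _

@[simp]
theorem mulN_oneN (α : Fin n → ℤ ≃. ℤ) : mulN α (oneN n) = α :=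
  funext fun _ => PEquiv.trans_refl _

@[simp]
theorem epsT_refl (j : Fin n) : epsT j (PEquiv.refl ℤ) = oneN n :=
  funext fun k => by by_cases hk : k = j <;> simp [epsT, oneN, hk]

theorem epsT_trans (j : Fin n) (a b : ℤ ≃. ℤ) :
    epsT j (a.trans b) = mulN (epsT j a) (epsT j b) :=
  funext fun k => by by_cases hk : k = j <;> simp [epsT, mulN, hk]

theorem IsCongruence.comap_epsT {ρ : (Fin n → ℤ ≃. ℤ) → (Fin n → ℤ ≃. ℤ) → Prop}
    (hρ : IsCongruence (IOZn n) mulN ρ) (j : Fin n) :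
    IsCongruence IOZ PEquiv.trans (fun a b => ρ (epsT j a) (epsT j b)) :=
  hρ.comap (epsT j) (fun _ => IOZn_epsT j) (epsT_trans j)

theorem IsCongruence.epsT_of_forall_ne {ρ : (Fin n → ℤ ≃. ℤ) → (Fin n → ℤ ≃. ℤ) → Prop}
    (hρ : IsCongruence (IOZn n) mulN ρ) {j : Fin n} {γ δ : Fin n → ℤ ≃. ℤ} (hγ : IOZn n γ)
    (hδ : IOZn n δ) (hγδ : ∀ k ≠ j, γ k = δ k) (h : ρ γ δ) :
    ρ (epsT j (γ j)) (epsT j (δ j)) := by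
  choose l r hl hr hlr using fun k => exists_trans_trans_eq_refl (hγ k)
  let L : Fin n → ℤ ≃. ℤ := fun k => if k = j then PEquiv.refl ℤ else l k
  let R : Fin n → ℤ ≃. ℤ := fun k => if k = j then PEquiv.refl ℤ else r k
  have hL : IOZn n L := fun k => by by_cases hk : k = j <;> simp [L, hk, hl k, IOZ.refl]
  have hR : IOZn n R := fun k => by by_cases hk : k = j <;> simp [R, hk, hr k, IOZ.refl]
  have hnormal : ∀ θ : Fin n → ℤ ≃. ℤ, (∀ k ≠ j, θ k = γ k) →
      mulN (mulN L θ) R = epsT j (θ j) := by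
    intro θ hθ
    funext k
    by_cases hk : k = j
    · simp [mulN, epsT, L, R, hk]
    · simp [mulN, epsT, L, R, hk, hθ k hk, hlr k]
  have := hρ.mul_right R (IOZn_mulN hL hγ) (IOZn_mulN hL hδ) hR (hρ.mul_left L hγ hδ hL h)
  rwa [hnormal γ fun _ _ => rfl, hnormal δ fun k hk => (hγδ k hk).symm] at this

end Tuples

section Sigma

variable {n : ℕ} {t : Finset (Fin n)} {j : Fin n}

theorem piecewise_oneN_apply_of_ne {ε : Fin n → ℤ ≃. ℤ}
    (hoff : ∀ i ∉ insert j t, ε i = PEquiv.refl ℤ) {k : Fin n} (hk : k ≠ j) :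
    t.piecewise ε (oneN n) k = ε k := by
  by_cases hkt : k ∈ t
  · simp [hkt]
  · simp [hkt, oneN, hoff k (by simp [hk, hkt])]

theorem mulN_epsT_piecewise_oneN (hj : j ∉ t) {ε : Fin n → ℤ ≃. ℤ}
    (hoff : ∀ i ∉ insert j t, ε i = PEquiv.refl ℤ) :
    mulN (epsT j (ε j)) (t.piecewise ε (oneN n)) = ε := by
  funext k
  by_cases hk : k = j
  · subst hk
    simp [mulN, epsT, hj, oneN]
  · simp [mulN, epsT, hk, piecewise_oneN_apply_of_ne hoff hk]

theorem sigmaSet_of_mulN_piecewise_eq {ε α β : Fin n → ℤ ≃. ℤ} (hε : IOZn n ε) (hidem : IsIdemN ε)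
    (h : mulN α (t.piecewise ε (oneN n)) = mulN β (t.piecewise ε (oneN n))) :
    sigmaSet n t α β := by
  refine ⟨t.piecewise ε (oneN n), IOZn_piecewise t hε, fun k => ?_,
    fun k hk => by simp [hk, oneN], h⟩
  by_cases hk : k ∈ t <;> simp [hk, hidem k, oneN]

theorem IsCongruence.refl_epsT_of_not_sigmaSet
    {ρ : (Fin n → ℤ ≃. ℤ) → (Fin n → ℤ ≃. ℤ) → Prop} (hρ : IsCongruence (IOZn n) mulN ρ)
    (hj : j ∉ t) {α β : Fin n → ℤ ≃. ℤ} (hα : IOZn n α) (hβ : IOZn n β) (hαβ : ρ α β)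
    (hσ : sigmaSet n (insert j t) α β) (hnot : ¬ sigmaSet n t α β) {e : ℤ ≃. ℤ} (he : IOZ e)
    (hidem : IsIdem e) : ρ (oneN n) (epsT j e) := by
  obtain ⟨ε, hε, hεidem, hoff, heq⟩ := hσ
  have hε' := IOZn_piecewise t hε
  have hoffj : ∀ k ≠ j, mulN α (t.piecewise ε (oneN n)) k = mulN β (t.piecewise ε (oneN n)) k :=
    fun k hk => by simpa [mulN, piecewise_oneN_apply_of_ne hoff hk] using congrFun heq k
  have hne : α j ≠ β j := fun h => hnot <| sigmaSet_of_mulN_piecewise_eq hε hεidem <|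
    funext fun k => by
      by_cases hk : k = j
      · simp [mulN, hk, h]
      · exact hoffj k hk
  have hαβj := hρ.epsT_of_forall_ne (IOZn_mulN hα hε') (IOZn_mulN hβ hε') hoffj
    (hρ.mul_right _ hα hβ hε' hαβ)
  simp only [mulN, Finset.piecewise_eq_of_notMem _ _ _ hj, oneN, PEquiv.trans_refl] at hαβj
  simpa only [epsT_refl] using (hρ.comap_epsT j).refl_of_isIdem (hα j) (hβ j) (hε j) (hεidem j)
    hαβj hne (congrFun heq j) he hidem

theorem IsCongruence.of_sigmaSet_insert
    {ρ : (Fin n → ℤ ≃. ℤ) → (Fin n → ℤ ≃. ℤ) → Prop} (hρ : IsCongruence (IOZn n) mulN ρ)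
    (hj : j ∉ t) (hlow : ∀ α β, IOZn n α → IOZn n β → sigmaSet n t α β → ρ α β)
    (hidem : ∀ e, IOZ e → IsIdem e → ρ (oneN n) (epsT j e)) {γ δ : Fin n → ℤ ≃. ℤ}
    (hγ : IOZn n γ) (hδ : IOZn n δ) (hσ : sigmaSet n (insert j t) γ δ) : ρ γ δ := by
  obtain ⟨ζ, hζ, hζidem, hoff, heq⟩ := hσ
  have he : IOZn n (epsT j (ζ j)) := IOZn_epsT j (hζ j)
  have hγe := hρ.mul_left γ (IOZn_oneN n) he hγ (hidem _ (hζ j) (hζidem j))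
  have hδe := hρ.mul_left δ (IOZn_oneN n) he hδ (hidem _ (hζ j) (hζidem j))
  rw [mulN_oneN] at hγe hδe
  have hσ : sigmaSet n t (mulN γ (epsT j (ζ j))) (mulN δ (epsT j (ζ j))) := by
    refine sigmaSet_of_mulN_piecewise_eq hζ hζidem ?_
    rw [mulN_assoc, mulN_assoc, mulN_epsT_piecewise_oneN hj hoff, heq]
  exact hρ.trans hγ (IOZn_mulN hγ he) hδ hγe <| hρ.trans (IOZn_mulN hγ he) (IOZn_mulN hδ he) hδ
    (hlow _ _ (IOZn_mulN hγ he) (IOZn_mulN hδ he) hσ) (hρ.symm hδ (IOZn_mulN hδ he) hδe)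

end Sigma

/-- any congruence between σ_[i₁,…,i_m] and σ_[i₁,…,i_m,i_{m+1}]
equals one of them. -/
theorem stmt17 (n : ℕ) (t : Finset (Fin n)) (j : Fin n) (hj : j ∉ t)
    (ρ : (Fin n → ℤ ≃. ℤ) → (Fin n → ℤ ≃. ℤ) → Prop) (hρ : IsCongOn n ρ)
    (hlow : ∀ α β, IOZn n α → IOZn n β → sigmaSet n t α β → ρ α β)
    (hhigh : ∀ α β, IOZn n α → IOZn n β → ρ α β → sigmaSet n (insert j t) α β) :
    (∀ α β, IOZn n α → IOZn n β → (ρ α β ↔ sigmaSet n t α β)) ∨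
    (∀ α β, IOZn n α → IOZn n β → (ρ α β ↔ sigmaSet n (insert j t) α β)) := by
  by_cases hcase : ∀ α β, IOZn n α → IOZn n β → ρ α β → sigmaSet n t α β
  · exact Or.inl fun α β hα hβ => ⟨hcase α β hα hβ, hlow α β hα hβ⟩
  push Not at hcase
  obtain ⟨α, β, hα, hβ, hαβ, hnot⟩ := hcase
  have hidem : ∀ e, IOZ e → IsIdem e → ρ (oneN n) (epsT j e) := fun e he heidem =>
    hρ.isCongruence.refl_epsT_of_not_sigmaSet hj hα hβ hαβ (hhigh α β hα hβ hαβ) hnot he heidem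
  exact Or.inr fun γ δ hγ hδ =>
    ⟨hhigh γ δ hγ hδ, hρ.isCongruence.of_sigmaSet_insert hj hlow hidem hγ hδ⟩
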